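/- arXiv:2508.06397 — 3 statements merged into one kernel-verified Lean document; each statement's English description precedes it below -/
import Mathlib

section
/- Let D ≥ 1 be an integer and let ξ : ℝ^D → ℝ be twice continuously differentiable with ξ(0) = 0, and strongly convex on ℝ_+^D, i.e. there exists λ > 0 such that x ↦ ξ(x) − (λ/2)|x|² is convex on ℝ_+^D. Then ξ* is differentiable on ℝ^D and for all x, y ∈ ℝ_+^D: (i) ∇ξ*(∇ξ(x)) = x; (ii) ∇ξ(∇ξ*(y)) − y ∈ ℝ_+^D; (iii) ∇ξ*(y) · (∇ξ(∇ξ*(y)) − y) = 0; (iv) ξ*(∇ξ(∇ξ*(y))) = ξ*(y). -/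
open MeasureTheory

/-- The nonnegative orthant `ℝ_+^D` in `ℝ^D`. -/
def orthant (D : ℕ) : Set (EuclideanSpace ℝ (Fin D)) := {x | ∀ i, 0 ≤ x i}

/-- The monotone conjugate `ξ*(y) = sup_{x ∈ ℝ_+^D} (x·y − ξ(x))`, valued in `ℝ ∪ {+∞}`
(formalized as `EReal`). -/
noncomputable def monotoneConj (D : ℕ) (ξ : EuclideanSpace ℝ (Fin D) → ℝ)
    (y : EuclideanSpace ℝ (Fin D)) : EReal :=
  ⨆ x : orthant D, (((inner ℝ x.1 y : ℝ) - ξ x.1 : ℝ) : EReal)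

/-! For `y ∈ ℝ^D` the strongly convex function `z ↦ ξ z - ⟪z, y⟫` attains its minimum over the
orthant at a unique point `X y`, so `ξ*(y) = ⟪X y, y⟫ - ξ (X y)`. Quadratic growth of a strongly
convex function around its minimiser makes `X` `λ⁻¹`-Lipschitz, and the envelope bound
`0 ≤ ξ*(z) - ξ*(y) - ⟪X y, z - y⟫ ≤ ⟪X z - X y, z - y⟫` then gives `∇ξ* = X`. The four identities
come from the first-order condition `0 ≤ ⟪∇ξ(X y) - y, z - X y⟫` for `z ∈ ℝ_+^D`: testing it at
`z = X y + eᵢ`, `0`, `2 • X y` gives (ii) and (iii); for `y = ∇ξ x` the point `x` itself satisfies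
it, which gives (i); and (iv) follows from (i) and (iii). -/

open InnerProductSpace Set Filter

theorem ConvexOn.add_apply_sub_le_of_hasFDerivAt {E : Type*} [NormedAddCommGroup E]
    [NormedSpace ℝ E] {s : Set E} {f : E → ℝ} {f' : E →L[ℝ] ℝ} {x z : E}
    (hf : ConvexOn ℝ s f) (hx : x ∈ s) (hz : z ∈ s) (hf' : HasFDerivAt f f' x) :
    f x + f' (z - x) ≤ f z := by
  have hline : ConvexOn ℝ (AffineMap.lineMap (k := ℝ) x z ⁻¹' s) (f ∘ AffineMap.lineMap x z) :=
    hf.comp_affineMap _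
  have hderiv : HasDerivAt (f ∘ AffineMap.lineMap (k := ℝ) x z) (f' (z - x)) 0 := by
    apply hf'.comp_hasDerivAt_of_eq 0 AffineMap.hasDerivAt_lineMap
    simp
  have := hline.le_slope_of_hasDerivAt (by simpa using hx) (by simpa using hz) one_pos hderiv
  simp only [slope_def_field, Function.comp_apply, AffineMap.lineMap_apply_one,
    AffineMap.lineMap_apply_zero, sub_zero, div_one] at this
  linarith

section InnerProductSpace

variable {E : Type*} [NormedAddCommGroup E] [InnerProductSpace ℝ E] {s : Set E} {f : E → ℝ}
  {m : ℝ} {x x' y z G : E}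

theorem StrongConvexOn.sub_inner (hf : StrongConvexOn s m f) (y : E) :
    StrongConvexOn s m (fun z => f z - ⟪z, y⟫_ℝ) := by
  have hlin : ConcaveOn ℝ s (fun z => ⟪z, y⟫_ℝ) :=
    ⟨hf.1, fun a _ b _ p q _ _ _ => by simp [inner_add_left, real_inner_smul_left]⟩
  have := hf.sub (uniformConcaveOn_zero.mpr hlin)
  rwa [add_zero] at this

variable [CompleteSpace E]

theorem HasGradientAt.sub_inner (hG : HasGradientAt f G x) (y : E) :
    HasGradientAt (fun z => f z - ⟪z, y⟫_ℝ) (G - y) x := by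
  rw [hasGradientAt_iff_hasFDerivAt, map_sub]
  have hfun : (fun z => f z - ⟪z, y⟫_ℝ) = fun z => f z - innerSL ℝ y z := by
    funext z
    rw [innerSL_apply_apply, real_inner_comm]
  rw [hfun]
  exact hG.hasFDerivAt.sub (innerSL ℝ y).hasFDerivAt

theorem StrongConvexOn.add_inner_add_sq_le (hf : StrongConvexOn s m f) (hx : x ∈ s) (hz : z ∈ s)
    (hG : HasGradientAt f G x) : f x + ⟪G, z - x⟫_ℝ + m / 2 * ‖z - x‖ ^ 2 ≤ f z := by
  have hderiv := hG.hasFDerivAt.sub ((hasStrictFDerivAt_norm_sq x).hasFDerivAt.const_mul (m / 2))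
  have := (strongConvexOn_iff_convex.mp hf).add_apply_sub_le_of_hasFDerivAt hx hz hderiv
  simp only [sub_apply, smul_apply, toDual_apply_apply, innerSL_apply_apply, smul_eq_mul,
    nsmul_eq_mul, Nat.cast_ofNat, inner_sub_right, real_inner_self_eq_norm_sq] at this
  rw [norm_sub_sq_real, inner_sub_right, real_inner_comm x z]
  linarith

theorem IsMinOn.inner_sub_nonneg_of_hasGradientAt (h : IsMinOn f s x) (hs : Convex ℝ s)
    (hx : x ∈ s) (hz : z ∈ s) (hG : HasGradientAt f G x) : 0 ≤ ⟪G, z - x⟫_ℝ :=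
  h.localize.hasFDerivWithinAt_nonneg hG.hasFDerivAt.hasFDerivWithinAt
    (sub_mem_posTangentConeAt_of_segment_subset (hs.segment_subset hx hz))

theorem StrongConvexOn.add_sq_le_of_isMinOn (hf : StrongConvexOn s m f) (h : IsMinOn f s x)
    (hx : x ∈ s) (hz : z ∈ s) (hG : HasGradientAt f G x) : f x + m / 2 * ‖z - x‖ ^ 2 ≤ f z := by
  have := hf.add_inner_add_sq_le hx hz hG
  have := h.inner_sub_nonneg_of_hasGradientAt hf.1 hx hz hG
  linarith

theorem StrongConvexOn.exists_isMinOn [ProperSpace E] {x₀ : E}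
    (hf : StrongConvexOn s m f) (hm : 0 < m) (hs : IsClosed s) (hcont : ContinuousOn f s)
    (hx₀ : x₀ ∈ s) (hG : HasGradientAt f G x₀) : ∃ x ∈ s, IsMinOn f s x := by
  refine hcont.exists_isMinOn' hs hx₀ ?_
  rw [eventually_inf_principal]
  filter_upwards [(isCompact_closedBall x₀ (2 * ‖G‖ / m)).compl_mem_cocompact] with z hfar hz
  have hR : 2 * ‖G‖ ≤ m * ‖z - x₀‖ := by
    rw [mem_compl_iff, Metric.mem_closedBall, dist_eq_norm, not_le, div_lt_iff₀ hm] at hfar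
    linarith
  have hquad := hf.add_inner_add_sq_le hx₀ hz hG
  have hinner := neg_abs_le ⟪G, z - x₀⟫_ℝ
  nlinarith [abs_real_inner_le_norm G (z - x₀), norm_nonneg (z - x₀)]

theorem hasGradientAt_inner_sub_of_isMinOn {X : E → E} (hXs : ∀ y, X y ∈ s)
    (hX : ∀ y, IsMinOn (fun z => f z - ⟪z, y⟫_ℝ) s (X y)) (hc : ContinuousAt X y) :
    HasGradientAt (fun y => ⟪X y, y⟫_ℝ - f (X y)) (X y) y := by
  rw [hasGradientAt_iff_isLittleO, Asymptotics.isLittleO_iff]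
  intro c hc_pos
  filter_upwards [hc.eventually (Metric.closedBall_mem_nhds (X y) hc_pos)] with z hz
  rw [dist_eq_norm] at hz
  have hlow := isMinOn_iff.mp (hX z) (X y) (hXs y)
  have hup := isMinOn_iff.mp (hX y) (X z) (hXs z)
  have hcs : ⟪X z - X y, z - y⟫_ℝ ≤ c * ‖z - y‖ :=
    (real_inner_le_norm _ _).trans (mul_le_mul_of_nonneg_right hz (norm_nonneg _))
  simp only [inner_sub_left, inner_sub_right] at hlow hup hcs ⊢
  rw [Real.norm_eq_abs, abs_le]
  constructor <;> linarith

theorem StrongConvexOn.lipschitzWith_of_isMinOn (hf : StrongConvexOn s m f) (hm : 0 < m)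
    (hd : Differentiable ℝ f) {X : E → E} (hXs : ∀ y, X y ∈ s)
    (hX : ∀ y, IsMinOn (fun z => f z - ⟪z, y⟫_ℝ) s (X y)) :
    LipschitzWith (Real.toNNReal m⁻¹) X := by
  refine LipschitzWith.of_dist_le_mul fun y y' => ?_
  rw [dist_eq_norm, dist_eq_norm, Real.coe_toNNReal _ (inv_nonneg.2 hm.le), inv_mul_eq_div,
    le_div_iff₀ hm]
  have hgrowth := (hf.sub_inner y).add_sq_le_of_isMinOn (hX y) (hXs y) (hXs y')
    ((hd _).hasGradientAt.sub_inner y)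
  have hgrowth' := (hf.sub_inner y').add_sq_le_of_isMinOn (hX y') (hXs y') (hXs y)
    ((hd _).hasGradientAt.sub_inner y')
  have hmono : m * ‖X y - X y'‖ ^ 2 ≤ ‖X y - X y'‖ * ‖y - y'‖ := by
    refine le_trans ?_ (real_inner_le_norm _ _)
    rw [norm_sub_rev (X y') (X y)] at hgrowth
    simp only [inner_sub_left, inner_sub_right] at hgrowth hgrowth' ⊢
    linarith
  rcases (norm_nonneg (X y - X y')).eq_or_lt with h0 | hpos
  · rw [← h0, zero_mul]; exact norm_nonneg _
  · nlinarith

theorem StrongConvexOn.eq_of_isMinOn_sub_inner (hf : StrongConvexOn s m f) (hm : 0 < m)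
    (hx : x ∈ s) (hx' : x' ∈ s) (hG : HasGradientAt f G x)
    (h : IsMinOn (fun z => f z - ⟪z, G⟫_ℝ) s x') : x' = x := by
  have hgrowth := (hf.sub_inner G).add_inner_add_sq_le hx hx' (hG.sub_inner G)
  have hmin := isMinOn_iff.mp h x hx
  rw [sub_self, inner_zero_left] at hgrowth
  have : ‖x' - x‖ ^ 2 ≤ 0 := by nlinarith
  simpa [sub_eq_zero] using this

end InnerProductSpace

section Orthant

variable {D : ℕ}

theorem zero_mem_orthant : (0 : EuclideanSpace ℝ (Fin D)) ∈ orthant D := fun _ => le_rfl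

theorem convex_orthant : Convex ℝ (orthant D) := fun _ hx _ hy _ _ ha hb _ i => by
  simpa using add_nonneg (mul_nonneg ha (hx i)) (mul_nonneg hb (hy i))

theorem isClosed_orthant : IsClosed (orthant D) := by
  simpa only [orthant, ofPred_forall] using
    isClosed_iInter fun i => isClosed_le continuous_const (PiLp.continuous_apply 2 _ i)

theorem mem_orthant_of_forall_inner_sub_nonneg {x G : EuclideanSpace ℝ (Fin D)}
    (hx : x ∈ orthant D) (h : ∀ z ∈ orthant D, 0 ≤ ⟪G, z - x⟫_ℝ) : G ∈ orthant D := by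
  classical
  intro i
  have hz : x + EuclideanSpace.single i 1 ∈ orthant D := fun j => by
    rcases eq_or_ne j i with rfl | hj
    · simpa using add_nonneg (hx j) zero_le_one
    · simpa [hj] using hx j
  simpa [EuclideanSpace.inner_single_right] using h _ hz

theorem inner_eq_zero_of_forall_inner_sub_nonneg {x G : EuclideanSpace ℝ (Fin D)}
    (hx : x ∈ orthant D) (h : ∀ z ∈ orthant D, 0 ≤ ⟪G, z - x⟫_ℝ) : ⟪x, G⟫_ℝ = 0 := by
  have h0 := h 0 zero_mem_orthant
  have h2 := h ((2 : ℝ) • x) fun i => by simpa using mul_nonneg zero_le_two (hx i)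
  rw [zero_sub, inner_neg_right] at h0
  rw [two_smul, add_sub_cancel_right] at h2
  rw [real_inner_comm]
  linarith

theorem monotoneConj_eq_of_isMinOn {ξ : EuclideanSpace ℝ (Fin D) → ℝ}
    {x y : EuclideanSpace ℝ (Fin D)} (hx : x ∈ orthant D)
    (h : IsMinOn (fun z => ξ z - ⟪z, y⟫_ℝ) (orthant D) x) :
    monotoneConj D ξ y = ((⟪x, y⟫_ℝ - ξ x : ℝ) : EReal) := by
  refine le_antisymm (iSup_le fun z => ?_) (le_iSup_of_le ⟨x, hx⟩ le_rfl)
  have := isMinOn_iff.mp h z.1 z.2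
  exact EReal.coe_le_coe_iff.mpr (by linarith)

end Orthant

theorem monotoneConj_strong_convexity_general (D : ℕ)
    (ξ : EuclideanSpace ℝ (Fin D) → ℝ)
    (hC2 : ContDiff ℝ 2 ξ)
    (lam : ℝ) (hlam : 0 < lam)
    (hstrong : ConvexOn ℝ (orthant D) (fun x => ξ x - lam / 2 * ‖x‖ ^ 2)) :
    ∃ f : EuclideanSpace ℝ (Fin D) → ℝ,
      (∀ y, monotoneConj D ξ y = (f y : EReal)) ∧
      Differentiable ℝ f ∧
      (∀ x ∈ orthant D, gradient f (gradient ξ x) = x) ∧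
      (∀ y ∈ orthant D, gradient ξ (gradient f y) - y ∈ orthant D) ∧
      (∀ y ∈ orthant D, (inner ℝ (gradient f y) (gradient ξ (gradient f y) - y) : ℝ) = 0) ∧
      (∀ y ∈ orthant D, f (gradient ξ (gradient f y)) = f y) := by
  have hd : Differentiable ℝ ξ := hC2.differentiable (by norm_num)
  have hξ : StrongConvexOn (orthant D) lam ξ := strongConvexOn_iff_convex.mpr hstrong
  choose X hXs hX using fun y => (hξ.sub_inner y).exists_isMinOn hlam isClosed_orthant
    (hd.continuous.sub (continuous_id.inner continuous_const)).continuousOn zero_mem_orthant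
    ((hd 0).hasGradientAt.sub_inner y)
  have hgrad (y) : HasGradientAt (fun y => ⟪X y, y⟫_ℝ - ξ (X y)) (X y) y :=
    hasGradientAt_inner_sub_of_isMinOn hXs hX
      (hξ.lipschitzWith_of_isMinOn hlam hd hXs hX).continuous.continuousAt
  have hfirst (y) : ∀ z ∈ orthant D, 0 ≤ ⟪gradient ξ (X y) - y, z - X y⟫_ℝ := fun z hz =>
    (hX y).inner_sub_nonneg_of_hasGradientAt convex_orthant (hXs y) hz
      ((hd _).hasGradientAt.sub_inner y)
  have hslack (y) : ⟪X y, gradient ξ (X y) - y⟫_ℝ = 0 :=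
    inner_eq_zero_of_forall_inner_sub_nonneg (hXs y) (hfirst y)
  have hinv (x) (hx : x ∈ orthant D) : X (gradient ξ x) = x :=
    hξ.eq_of_isMinOn_sub_inner hlam hx (hXs _) (hd x).hasGradientAt (hX _)
  refine ⟨fun y => ⟪X y, y⟫_ℝ - ξ (X y), fun y => monotoneConj_eq_of_isMinOn (hXs y) (hX y),
    fun y => (hgrad y).differentiableAt, fun x hx => ?_, fun y _ => ?_, fun y _ => ?_,
    fun y _ => ?_⟩ <;> simp only [(hgrad _).gradient]
  · exact hinv x hx
  · exact mem_orthant_of_forall_inner_sub_nonneg (hXs y) (hfirst y)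
  · exact hslack y
  · rw [hinv _ (hXs y), ← sub_eq_zero, ← hslack y, inner_sub_right]
    ring

/-- if `ξ : ℝ^D → ℝ` is `C²` with `ξ(0) = 0` and strongly convex on `ℝ_+^D`, then
`ξ*` is (real-valued and) differentiable on `ℝ^D` and, for all `x, y ∈ ℝ_+^D`:
(i) `∇ξ*(∇ξ(x)) = x`; (ii) `∇ξ(∇ξ*(y)) − y ∈ ℝ_+^D`;
(iii) `∇ξ*(y)·(∇ξ(∇ξ*(y)) − y) = 0`; (iv) `ξ*(∇ξ(∇ξ*(y))) = ξ*(y)`. -/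
theorem monotoneConj_strong_convexity (D : ℕ) (hD : 1 ≤ D)
    (ξ : EuclideanSpace ℝ (Fin D) → ℝ)
    (hC2 : ContDiff ℝ 2 ξ) (hξ0 : ξ 0 = 0)
    (lam : ℝ) (hlam : 0 < lam)
    (hstrong : ConvexOn ℝ (orthant D) (fun x => ξ x - lam / 2 * ‖x‖ ^ 2)) :
    ∃ f : EuclideanSpace ℝ (Fin D) → ℝ,
      (∀ y, monotoneConj D ξ y = (f y : EReal)) ∧
      Differentiable ℝ f ∧
      (∀ x ∈ orthant D, gradient f (gradient ξ x) = x) ∧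
      (∀ y ∈ orthant D, gradient ξ (gradient f y) - y ∈ orthant D) ∧
      (∀ y ∈ orthant D, (inner ℝ (gradient f y) (gradient ξ (gradient f y) - y) : ℝ) = 0) ∧
      (∀ y ∈ orthant D, f (gradient ξ (gradient f y)) = f y) :=
  monotoneConj_strong_convexity_general D ξ hC2 lam hlam hstrong
end

section
/- Let ξ : ℝ² → ℝ be given by an absolutely convergent power series ξ(x₁,x₂) = Σ_{i,j ≥ 0} c_{ij} x₁^i x₂^j on ℝ² with all coefficients c_{ij} ≥ 0 and with c_{00} = 0 and c_{10} = c_{01} = 0 (so that ξ(0) = 0 and ∇ξ(0) = 0), and assume that ξ is convex on ℝ_+². Then for all real numbers a ≤ a' and b ≤ b', one has ξ*(a,b) + ξ*(a',b') ≤ ξ*(a',b) + ξ*(a,b'). -/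
open MeasureTheory

/-- The vector `(a, b) ∈ ℝ²`. -/
def vec2 (a b : ℝ) : EuclideanSpace ℝ (Fin 2) := WithLp.toLp 2 ![a, b]

/-!
Take near-maximisers `x` for `(a, b)` and `y` for `(a', b')` and cross them: the points
`u = (x₀ ⊔ y₀, x₁ ⊓ y₁)` and `v = (x₀ ⊓ y₀, x₁ ⊔ y₁)` still lie in the orthant. Since `a ≤ a'` and
`b ≤ b'`, the rearrangement inequality gives `x·(a,b) + y·(a',b') ≤ u·(a',b) + v·(a,b')`. Every
monomial `s ^ i * t ^ j` is increasing in both variables on the orthant, hence supermodular, so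
`ξ u + ξ v ≤ ξ x + ξ y` term by term of the power series. Thus `u` and `v` do at least as well
for `(a', b)` and `(a, b')`.
-/

lemma MonotoneOn.mul_max_min_add_mul_min_max_le {α R : Type*} [LinearOrder α] [CommRing R]
    [LinearOrder R] [IsStrictOrderedRing R] {S : Set α} {f g : α → R}
    (hf : MonotoneOn f S) (hg : MonotoneOn g S) {s s' t t' : α}
    (hs : s ∈ S) (hs' : s' ∈ S) (ht : t ∈ S) (ht' : t' ∈ S) :
    f (max s s') * g (min t t') + f (min s s') * g (max t t') ≤ f s * g t + f s' * g t' := by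
  rcases le_total s s' with h | h <;> rcases le_total t t' with h' | h' <;>
    simp only [max_eq_left, max_eq_right, min_eq_left, min_eq_right, h, h']
  · linarith [mul_add_mul_le_mul_add_mul (hf hs hs' h) (hg ht ht' h')]
  · linarith
  · linarith
  · linarith [mul_add_mul_le_mul_add_mul (hf hs' hs h) (hg ht' ht h')]

lemma mul_add_mul_le_max_mul_add_min_mul {R : Type*} [CommRing R] [LinearOrder R]
    [IsStrictOrderedRing R] (s s' : R) {a a' : R} (ha : a ≤ a') :
    s * a + s' * a' ≤ max s s' * a' + min s s' * a := by
  rcases le_total s s' with h | h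
  · simp only [max_eq_right h, min_eq_left h]
    linarith
  · simp only [max_eq_left h, min_eq_right h]
    linarith [mul_add_mul_le_mul_add_mul h ha]

lemma EReal.iSup_add_iSup_le_iSup_add_iSup {ι κ : Sort*} {f g : ι → EReal} {f' g' : κ → EReal}
    (h : ∀ i j, ∃ k l, f i + g j ≤ f' k + g' l) :
    iSup f + iSup g ≤ iSup f' + iSup g' := by
  refine EReal.add_le_of_forall_lt fun p hp q hq => ?_
  obtain ⟨i, hi⟩ := lt_iSup_iff.1 hp
  obtain ⟨j, hj⟩ := lt_iSup_iff.1 hq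
  obtain ⟨k, l, hkl⟩ := h i j
  calc p + q ≤ f i + g j := add_le_add hi.le hj.le
    _ ≤ f' k + g' l := hkl
    _ ≤ iSup f' + iSup g' := add_le_add (le_iSup f' k) (le_iSup g' l)

lemma monotoneConj_add_le_of_forall_exists {D : ℕ} {ξ : EuclideanSpace ℝ (Fin D) → ℝ}
    {y₁ y₂ z₁ z₂ : EuclideanSpace ℝ (Fin D)}
    (h : ∀ x₁ ∈ orthant D, ∀ x₂ ∈ orthant D, ∃ u₁ ∈ orthant D, ∃ u₂ ∈ orthant D,
      inner ℝ x₁ y₁ - ξ x₁ + (inner ℝ x₂ y₂ - ξ x₂) ≤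
        inner ℝ u₁ z₁ - ξ u₁ + (inner ℝ u₂ z₂ - ξ u₂)) :
    monotoneConj D ξ y₁ + monotoneConj D ξ y₂ ≤ monotoneConj D ξ z₁ + monotoneConj D ξ z₂ := by
  refine EReal.iSup_add_iSup_le_iSup_add_iSup fun x₁ x₂ => ?_
  obtain ⟨u₁, hu₁, u₂, hu₂, hle⟩ := h x₁ x₁.2 x₂ x₂.2
  exact ⟨⟨u₁, hu₁⟩, ⟨u₂, hu₂⟩, by exact_mod_cast hle⟩

lemma tsum_max_min_add_tsum_min_max_le {c : ℕ → ℕ → ℝ} (hc : ∀ i j, 0 ≤ c i j)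
    (hsum : ∀ s t : ℝ, Summable fun p : ℕ × ℕ => c p.1 p.2 * s ^ p.1 * t ^ p.2)
    {s s' t t' : ℝ} (hs : 0 ≤ s) (hs' : 0 ≤ s') (ht : 0 ≤ t) (ht' : 0 ≤ t') :
    ∑' p : ℕ × ℕ, c p.1 p.2 * max s s' ^ p.1 * min t t' ^ p.2 +
        ∑' p : ℕ × ℕ, c p.1 p.2 * min s s' ^ p.1 * max t t' ^ p.2 ≤
      ∑' p : ℕ × ℕ, c p.1 p.2 * s ^ p.1 * t ^ p.2 +
        ∑' p : ℕ × ℕ, c p.1 p.2 * s' ^ p.1 * t' ^ p.2 := by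
  rw [← (hsum _ _).tsum_add (hsum _ _), ← (hsum _ _).tsum_add (hsum _ _)]
  refine Summable.tsum_le_tsum (fun p => ?_) ((hsum _ _).add (hsum _ _))
    ((hsum _ _).add (hsum _ _))
  have hmono := (pow_left_monotoneOn (M₀ := ℝ) (n := p.1)).mul_max_min_add_mul_min_max_le
    (pow_left_monotoneOn (n := p.2)) hs hs' ht ht'
  simpa only [mul_assoc, ← mul_add] using mul_le_mul_of_nonneg_left hmono (hc p.1 p.2)

@[simp] lemma vec2_apply_zero (a b : ℝ) : vec2 a b 0 = a := rfl

@[simp] lemma vec2_apply_one (a b : ℝ) : vec2 a b 1 = b := rfl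

lemma vec2_mem_orthant {a b : ℝ} (ha : 0 ≤ a) (hb : 0 ≤ b) : vec2 a b ∈ orthant 2 :=
  Fin.forall_fin_two.2 ⟨ha, hb⟩

lemma inner_vec2 (x : EuclideanSpace ℝ (Fin 2)) (a b : ℝ) :
    inner ℝ x (vec2 a b) = x 0 * a + x 1 * b := by
  simp [PiLp.inner_apply, Fin.sum_univ_two, mul_comm]

theorem monotoneConj_submodular_general (c : ℕ → ℕ → ℝ) (hc : ∀ i j, 0 ≤ c i j)
    (ξ : EuclideanSpace ℝ (Fin 2) → ℝ)
    (habs : ∀ x : EuclideanSpace ℝ (Fin 2),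
      Summable (fun p : ℕ × ℕ => |c p.1 p.2 * x 0 ^ p.1 * x 1 ^ p.2|))
    (hξ : ∀ x : EuclideanSpace ℝ (Fin 2),
      ξ x = ∑' p : ℕ × ℕ, c p.1 p.2 * x 0 ^ p.1 * x 1 ^ p.2)
    (a a' b b' : ℝ) (ha : a ≤ a') (hb : b ≤ b') :
    monotoneConj 2 ξ (vec2 a b) + monotoneConj 2 ξ (vec2 a' b') ≤
      monotoneConj 2 ξ (vec2 a' b) + monotoneConj 2 ξ (vec2 a b') := by
  have hsum (s t : ℝ) : Summable fun p : ℕ × ℕ => c p.1 p.2 * s ^ p.1 * t ^ p.2 := by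
    simpa using (habs (vec2 s t)).of_abs
  refine monotoneConj_add_le_of_forall_exists fun x hx y hy =>
    ⟨vec2 (max (x 0) (y 0)) (min (x 1) (y 1)),
      vec2_mem_orthant (le_max_of_le_left (hx 0)) (le_min (hx 1) (hy 1)),
      vec2 (min (x 0) (y 0)) (max (x 1) (y 1)),
      vec2_mem_orthant (le_min (hx 0) (hy 0)) (le_max_of_le_left (hx 1)), ?_⟩
  have hξ_le := tsum_max_min_add_tsum_min_max_le hc hsum (hx 0) (hy 0) (hx 1) (hy 1)
  have hinner₀ := mul_add_mul_le_max_mul_add_min_mul (x 0) (y 0) ha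
  have hinner₁ := mul_add_mul_le_max_mul_add_min_mul (x 1) (y 1) hb
  simp only [hξ, inner_vec2, vec2_apply_zero, vec2_apply_one]
  linarith

/-- if `ξ : ℝ² → ℝ` is given by an absolutely convergent power series with
nonnegative coefficients, vanishing constant and linear terms, and `ξ` is convex on `ℝ_+²`,
then `ξ*(a,b) + ξ*(a',b') ≤ ξ*(a',b) + ξ*(a,b')` whenever `a ≤ a'` and `b ≤ b'`. -/
theorem monotoneConj_submodular (c : ℕ → ℕ → ℝ) (hc : ∀ i j, 0 ≤ c i j)
    (hc00 : c 0 0 = 0) (hc10 : c 1 0 = 0) (hc01 : c 0 1 = 0)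
    (ξ : EuclideanSpace ℝ (Fin 2) → ℝ)
    (habs : ∀ x : EuclideanSpace ℝ (Fin 2),
      Summable (fun p : ℕ × ℕ => |c p.1 p.2 * x 0 ^ p.1 * x 1 ^ p.2|))
    (hξ : ∀ x : EuclideanSpace ℝ (Fin 2),
      ξ x = ∑' p : ℕ × ℕ, c p.1 p.2 * x 0 ^ p.1 * x 1 ^ p.2)
    (hconv : ConvexOn ℝ (orthant 2) ξ)
    (a a' b b' : ℝ) (ha : a ≤ a') (hb : b ≤ b') :
    monotoneConj 2 ξ (vec2 a b) + monotoneConj 2 ξ (vec2 a' b') ≤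
      monotoneConj 2 ξ (vec2 a' b) + monotoneConj 2 ξ (vec2 a b') :=
  monotoneConj_submodular_general c hc ξ habs hξ a a' b b' ha hb
end

section
/- Let D ≥ 1 be an integer and let μ, ν be monotone probability measures on ℝ_+^D. Then μ = ν if and only if for every d ∈ {1,…,D}, the d-th marginal of μ equals the d-th marginal of ν (the marginal being the pushforward under the coordinate map x ↦ x_d). -/
open MeasureTheory

/-- A probability measure `μ` on `ℝ_+^D` is monotone if it is the law of `q(U)` for some
increasing map `q : [0,1) → ℝ_+^D`, with `U` uniform on `[0,1)`.  (Such a `q` is automatically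
almost-everywhere measurable.) -/
def IsMonotoneMeasure (D : ℕ) (μ : Measure (EuclideanSpace ℝ (Fin D))) : Prop :=
  ∃ q : ℝ → EuclideanSpace ℝ (Fin D),
    AEMeasurable q (volume.restrict (Set.Ico (0 : ℝ) 1)) ∧
    (∀ s : ℝ, 0 ≤ s → s < 1 → q s ∈ orthant D) ∧
    (∀ s t : ℝ, 0 ≤ s → s ≤ t → t < 1 → ∀ i, q s i ≤ q t i) ∧
    μ = Measure.map q (volume.restrict (Set.Ico (0 : ℝ) 1))

/-!
Two increasing maps `q, r` on `[a, b)` with the same distribution under Lebesgue measure agree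
almost everywhere.  If `t < t'` and `r t' < q t`, then `{r ≤ r t'}` contains `[a, t']` while
`{q ≤ r t'}` is contained in `[a, t)`, so these sublevel sets have different measures; hence
`q t ≤ r t'` and symmetrically.  The open intervals `(q t, r t)` for `q t < r t` are therefore
pairwise disjoint, so there are only countably many such `t`.  Applied coordinatewise to the
quantile maps of two monotone measures, this shows the maps agree a.e., hence the measures agree.
-/

open Set

section MonotoneOnIco

variable {a b : ℝ} {q r : ℝ → ℝ}

theorem MonotoneOn.le_of_lt_of_measure_setOf_le_eq (hq : MonotoneOn q (Ico a b))
    (hr : MonotoneOn r (Ico a b))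
    (hF : ∀ x, volume.restrict (Ico a b) {s | q s ≤ x} = volume.restrict (Ico a b) {s | r s ≤ x})
    {t t' : ℝ} (ht : t ∈ Ico a b) (ht' : t' ∈ Ico a b) (htt' : t < t') :
    q t ≤ r t' := by
  by_contra! hlt
  have hr_sub : Icc a t' ⊆ {s | r s ≤ r t'} ∩ Ico a b := fun s hs =>
    have hs' : s ∈ Ico a b := ⟨hs.1, hs.2.trans_lt ht'.2⟩
    ⟨hr hs' ht' hs.2, hs'⟩
  have hq_sub : {s | q s ≤ r t'} ∩ Ico a b ⊆ Ico a t := fun s ⟨hs, hsI⟩ =>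
    ⟨hsI.1, lt_of_not_ge fun hts => (hq ht hsI hts).not_gt (hs.trans_lt hlt)⟩
  have hvol : ENNReal.ofReal (t' - a) ≤ ENNReal.ofReal (t - a) := by
    calc ENNReal.ofReal (t' - a) = volume (Icc a t') := Real.volume_Icc.symm
      _ ≤ volume ({s | r s ≤ r t'} ∩ Ico a b) := measure_mono hr_sub
      _ = volume ({s | q s ≤ r t'} ∩ Ico a b) := by
        simpa only [Measure.restrict_apply' measurableSet_Ico] using (hF (r t')).symm
      _ ≤ volume (Ico a t) := measure_mono hq_sub
      _ = ENNReal.ofReal (t - a) := Real.volume_Ico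
  rw [ENNReal.ofReal_le_ofReal_iff (sub_nonneg.2 ht.1)] at hvol
  linarith

theorem MonotoneOn.countable_setOf_lt_of_measure_setOf_le_eq (hq : MonotoneOn q (Ico a b))
    (hr : MonotoneOn r (Ico a b))
    (hF : ∀ x, volume.restrict (Ico a b) {s | q s ≤ x} = volume.restrict (Ico a b) {s | r s ≤ x}) :
    {t ∈ Ico a b | q t < r t}.Countable := by
  refine Set.PairwiseDisjoint.countable_of_isOpen (s := fun t => Ioo (q t) (r t)) ?_
    (fun _ _ => isOpen_Ioo) (fun _ ht => nonempty_Ioo.2 ht.2)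
  have hsep : ∀ t ∈ Ico a b, ∀ t' ∈ Ico a b, t < t' → r t ≤ q t' := fun t ht t' ht' htt' =>
    hr.le_of_lt_of_measure_setOf_le_eq hq (fun x => (hF x).symm) ht ht' htt'
  intro t ht t' ht' hne
  rcases hne.lt_or_gt with htt' | ht't
  · exact (Ioc_disjoint_Ioc_of_le (hsep t ht.1 t' ht'.1 htt')).mono
      Ioo_subset_Ioc_self Ioo_subset_Ioc_self
  · exact (Ioc_disjoint_Ioc_of_le (hsep t' ht'.1 t ht.1 ht't)).symm.mono
      Ioo_subset_Ioc_self Ioo_subset_Ioc_self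

theorem MonotoneOn.ae_eq_of_measure_setOf_le_eq (hq : MonotoneOn q (Ico a b))
    (hr : MonotoneOn r (Ico a b))
    (hF : ∀ x, volume.restrict (Ico a b) {s | q s ≤ x} = volume.restrict (Ico a b) {s | r s ≤ x}) :
    q =ᵐ[volume.restrict (Ico a b)] r := by
  have hF' x := (hF x).symm
  have hcount := (hq.countable_setOf_lt_of_measure_setOf_le_eq hr hF).union
    (hr.countable_setOf_lt_of_measure_setOf_le_eq hq hF')
  rw [Filter.EventuallyEq, ae_restrict_iff' measurableSet_Ico, ae_iff]
  refine measure_mono_null (fun t ht => ?_) (hcount.measure_zero volume)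
  obtain ⟨htI, hne⟩ := Classical.not_imp.1 ht
  rcases Ne.lt_or_gt hne with h | h
  · exact Or.inl ⟨htI, h⟩
  · exact Or.inr ⟨htI, h⟩

end MonotoneOnIco

theorem measure_setOf_le_eq_of_map_eq {α : Type*} [MeasurableSpace α] {μ : Measure α}
    {f g : α → ℝ} (hf : AEMeasurable f μ) (hg : AEMeasurable g μ) (h : μ.map f = μ.map g)
    (x : ℝ) : μ {s | f s ≤ x} = μ {s | g s ≤ x} := by
  have h_Iic := congrArg (· (Iic x)) h
  rwa [Measure.map_apply_of_aemeasurable hf measurableSet_Iic,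
    Measure.map_apply_of_aemeasurable hg measurableSet_Iic] at h_Iic

theorem monotoneMeasure_eq_iff_marginals_general (D : ℕ)
    (μ ν : Measure (EuclideanSpace ℝ (Fin D)))
    (hμ : IsMonotoneMeasure D μ) (hν : IsMonotoneMeasure D ν) :
    μ = ν ↔ ∀ d : Fin D,
      μ.map (fun x : EuclideanSpace ℝ (Fin D) => x d)
        = ν.map (fun x : EuclideanSpace ℝ (Fin D) => x d) := by
  refine ⟨fun h d => h ▸ rfl, fun h => ?_⟩
  obtain ⟨q, hq_meas, -, hq_mono, rfl⟩ := hμ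
  obtain ⟨r, hr_meas, -, hr_mono, rfl⟩ := hν
  have heval (d : Fin D) : Measurable fun x : EuclideanSpace ℝ (Fin D) => x d :=
    (EuclideanSpace.proj d).continuous.measurable
  have hcoord : ∀ d, (fun s => q s d) =ᵐ[volume.restrict (Ico 0 1)] fun s => r s d := by
    intro d
    have hmap := h d
    rw [AEMeasurable.map_map_of_aemeasurable (heval d).aemeasurable hq_meas,
      AEMeasurable.map_map_of_aemeasurable (heval d).aemeasurable hr_meas] at hmap
    exact MonotoneOn.ae_eq_of_measure_setOf_le_eq
      (fun s hs t ht hst => hq_mono s t hs.1 hst ht.2 d)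
      (fun s hs t ht hst => hr_mono s t hs.1 hst ht.2 d)
      (measure_setOf_le_eq_of_map_eq ((heval d).comp_aemeasurable hq_meas)
        ((heval d).comp_aemeasurable hr_meas) hmap)
  have hae : q =ᵐ[volume.restrict (Ico 0 1)] r := by
    filter_upwards [ae_all_iff.2 hcoord] with s hs
    exact PiLp.ext hs
  exact Measure.map_congr hae

/-- two monotone probability measures on `ℝ_+^D` coincide if and only if all
their one-dimensional marginals coincide. -/
theorem monotoneMeasure_eq_iff_marginals (D : ℕ) (hD : 1 ≤ D)
    (μ ν : Measure (EuclideanSpace ℝ (Fin D)))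
    (hμ : IsMonotoneMeasure D μ) (hν : IsMonotoneMeasure D ν) :
    μ = ν ↔ ∀ d : Fin D,
      μ.map (fun x : EuclideanSpace ℝ (Fin D) => x d)
        = ν.map (fun x : EuclideanSpace ℝ (Fin D) => x d) :=
  monotoneMeasure_eq_iff_marginals_general D μ ν hμ hν
end
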